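/- arXiv:1704.02746 — 3 statements merged into one kernel-verified Lean document; each statement's English description precedes it below -/
import Mathlib

section
/- Let (G,+) be a locally compact Hausdorff abelian topological group with a Haar measure |·|, let E ⊆ G be a Haar-measurable set, let X = {0,1}^G carry the product topology (each factor {0,1} discrete), for g ∈ G let T_g : X → X be the shift (T_g x)(t) = x(t+g), and let χ ∈ X be the indicator function of E. Then for every continuous function φ : X → ℝ, the map G → ℝ, g ↦ φ(T_g χ), is Haar-measurable. -/
open MeasureTheory Filter Topology

/-!
The shift `g ↦ T_g χ` is measurable into `X` for the product σ-algebra, since each coordinate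
`g ↦ χ (t + g)` is. For uncountable `G` that σ-algebra is strictly smaller than the Borel
σ-algebra of `X`, but continuous `φ` are still measurable for it: the measurable continuous
functions form a closed subalgebra of `C(X, ℝ)` containing the coordinate indicators, which
separate points, so by Stone–Weierstrass it is everything.
-/

namespace ContinuousMap

variable (X : Type*) [TopologicalSpace X] [MeasurableSpace X]

def measurableSubalgebra : Subalgebra ℝ C(X, ℝ) where
  carrier := {f | Measurable f}
  mul_mem' hf hg := hf.mul hg
  add_mem' hf hg := hf.add hg
  algebraMap_mem' _ := measurable_const

variable {X} [CompactSpace X]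

theorem isClosed_measurableSubalgebra :
    IsClosed (measurableSubalgebra X : Set C(X, ℝ)) := by
  refine isClosed_of_closure_subset fun f hf => ?_
  obtain ⟨u, hu, hlim⟩ := mem_closure_iff_seq_limit.mp hf
  exact measurable_of_tendsto_metrizable hu
    (tendsto_pi_nhds.mpr fun x => ((continuous_eval_const x).tendsto f).comp hlim)

theorem measurable_of_separatesPoints (hsep : (measurableSubalgebra X).SeparatesPoints)
    (f : C(X, ℝ)) : Measurable f := by
  have hdense := subalgebra_topologicalClosure_eq_top_of_separatesPoints _ hsep
  exact Subalgebra.topologicalClosure_minimal le_rfl isClosed_measurableSubalgebra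
    (hdense ▸ Algebra.mem_top)

end ContinuousMap

theorem Continuous.measurable_of_pi_finite {ι α : Type*} [Finite α] [TopologicalSpace α]
    [DiscreteTopology α] [MeasurableSpace α] [DiscreteMeasurableSpace α]
    {φ : (ι → α) → ℝ} (hφ : Continuous φ) : Measurable φ := by
  refine ContinuousMap.measurable_of_separatesPoints (fun x y hxy => ?_) ⟨φ, hφ⟩
  obtain ⟨t, ht⟩ := Function.ne_iff.mp hxy
  let δ : α → ℝ := ({x t} : Set α).indicator 1
  refine ⟨_, ⟨⟨δ ∘ Function.eval t, ?_⟩, ?_, rfl⟩, ?_⟩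
  · exact continuous_of_discreteTopology.comp (continuous_apply t)
  · exact (Measurable.of_discrete (f := δ)).comp (measurable_pi_apply t)
  · simp [δ, Ne.symm ht]

theorem measurable_eval_shift_indicator_general {G : Type*} [AddCommGroup G] [TopologicalSpace G]
    [IsTopologicalAddGroup G]
    [MeasurableSpace G] [BorelSpace G]
    (E : Set G) (hE : MeasurableSet E)
    (χ : G → Bool) (hχ : ∀ t : G, χ t = true ↔ t ∈ E)
    (φ : (G → Bool) → ℝ) (hφ : Continuous φ) :
    Measurable (fun g : G => φ (fun t => χ (t + g))) := by
  have hχ_meas : Measurable χ :=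
    measurable_to_bool (by rwa [show χ ⁻¹' {true} = E from Set.ext hχ])
  have hshift : Measurable fun g : G => fun t => χ (t + g) :=
    measurable_pi_lambda _ fun t => hχ_meas.comp (continuous_const_add t).measurable
  exact hφ.measurable_of_pi_finite.comp hshift

/-- Let `(G,+)` be a locally compact Hausdorff abelian topological group with a Haar
measure `μ`, `E ⊆ G` a measurable set, `X = {0,1}^G` (encoded as `G → Bool`) with the
product topology, `T_g : X → X` the shift `(T_g x)(t) = x (t + g)`, and `χ ∈ X` the
indicator function of `E`.  Then for every continuous `φ : X → ℝ`, the map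
`g ↦ φ (T_g χ)` is measurable. -/
theorem measurable_eval_shift_indicator {G : Type*} [AddCommGroup G] [TopologicalSpace G]
    [IsTopologicalAddGroup G] [LocallyCompactSpace G] [T2Space G]
    [MeasurableSpace G] [BorelSpace G]
    (μ : Measure G) [μ.IsAddHaarMeasure]
    (E : Set G) (hE : MeasurableSet E)
    (χ : G → Bool) (hχ : ∀ t : G, χ t = true ↔ t ∈ E)
    (φ : (G → Bool) → ℝ) (hφ : Continuous φ) :
    Measurable (fun g : G => φ (fun t => χ (t + g))) :=
  measurable_eval_shift_indicator_general E hE χ hχ φ hφ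
end

section
/- Let (G,+) be a locally compact Hausdorff abelian topological group with a Haar measure |·|, F ⊆ G a compact subset, 𝓕 = (F_n)_{n=1}^∞ an F-Følner sequence in (G,+,|·|), and E ⊆ G a Haar-measurable set such that the limit lim_{n→∞} |E ∩ F_n| / |F_n| exists and equals D*_𝓕(E). Let X = {0,1}^G with the product topology, T_g the shift (T_g x)(t) = x(t+g), χ ∈ X the indicator of E, μ_n the Baire probability measure on X with μ_n(φ) = (1/|F_n|) ∫_{F_n} φ(T_g χ) dg, and [1]_e = {x ∈ X : x(e) = 1} where e is the identity of G. Then every weak-* cluster point μ of (μ_n)_{n=1}^∞ satisfies μ([1]_e) = D*_𝓕(E); in particular, if D*_𝓕(E) > 0 then μ([1]_e) > 0. -/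
open MeasureTheory Filter Topology

/-- The upper density of a set `A` corresponding to a sequence `F` of subsets of `G`,
with respect to the measure `μ`:  `D*_𝓕(A) = limsup_n |A ∩ F_n| / |F_n|`. -/
noncomputable def upperDensity {G : Type*} [MeasurableSpace G]
    (μ : Measure G) (F : ℕ → Set G) (A : Set G) : ℝ :=
  Filter.limsup (fun n => (μ (A ∩ F n)).toReal / (μ (F n)).toReal) Filter.atTop

/-- `F` is an `S`-Følner sequence in `(G, +, μ)`:  a sequence of compact subsets of
positive finite measure such that `|(g + F_n) ∆ F_n| / |F_n| → 0` for every `g ∈ S`. -/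
def IsFolnerSeqOn {G : Type*} [AddCommGroup G] [TopologicalSpace G] [MeasurableSpace G]
    (μ : Measure G) (S : Set G) (F : ℕ → Set G) : Prop :=
  (∀ n, IsCompact (F n)) ∧ (∀ n, 0 < μ (F n) ∧ μ (F n) < ⊤) ∧
    ∀ g ∈ S, Filter.Tendsto
      (fun n => (μ (symmDiff ((g + ·) '' F n) (F n))).toReal / (μ (F n)).toReal)
      Filter.atTop (nhds 0)

/-!
Test the weak-* cluster relation against the single continuous function `1_{[1]_e}`.
Since `(T_g χ)(e) = χ(g)`, its `μ_n`-integral is `|E ∩ F_n| / |F_n|`, which tends to `D*_𝓕(E)` by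
assumption, while its `ν`-integral is `ν([1]_e)`; a cluster point of a convergent real sequence
is its limit.
-/

theorem MapClusterPt.eq_of_tendsto_comp {α X Y : Type*} [TopologicalSpace X] [TopologicalSpace Y]
    [T2Space Y] {x : X} {l : Filter α} {u : α → X} {f : X → Y} {y : Y}
    (h : MapClusterPt x l u) (hf : ContinuousAt f x) (hfu : Tendsto (f ∘ u) l (𝓝 y)) :
    f x = y :=
  eq_of_nhds_neBot ((h.continuousAt_comp hf).clusterPt.mono hfu).neBot

section CylinderIndicator

variable {ι : Type*}

theorem measurableSet_setOf_apply_eq_true (i : ι) :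
    MeasurableSet {x : ι → Bool | x i = true} :=
  measurableSet_eq_fun (measurable_pi_apply i) measurable_const

theorem isClopen_setOf_apply_eq_true (i : ι) : IsClopen {x : ι → Bool | x i = true} :=
  (isClopen_discrete {true}).preimage (continuous_apply i)

noncomputable def cylinderIndicator (i : ι) : C(ι → Bool, ℝ) where
  toFun := {x | x i = true}.indicator 1
  continuous_toFun := (isClopen_setOf_apply_eq_true i).continuous_indicator continuous_const

theorem coe_cylinderIndicator (i : ι) :
    ⇑(cylinderIndicator i) = {x : ι → Bool | x i = true}.indicator 1 :=
  rfl

theorem integral_cylinderIndicator (ν : Measure (ι → Bool)) (i : ι) :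
    ∫ x, cylinderIndicator i x ∂ν = ν.real {x | x i = true} := by
  rw [coe_cylinderIndicator]
  exact integral_indicator_one (measurableSet_setOf_apply_eq_true i)

end CylinderIndicator

theorem cylinderIndicator_zero_shift {G : Type*} [AddZeroClass G] {E : Set G} {χ : G → Bool}
    (hχ : ∀ t, χ t = true ↔ t ∈ E) (g : G) :
    cylinderIndicator (0 : G) (fun t => χ (t + g)) = E.indicator 1 g := by
  classical
  simp only [coe_cylinderIndicator, Set.indicator_apply, Set.mem_ofPred_eq, zero_add, hχ,
    Pi.one_apply]

theorem setIntegral_cylinderIndicator_shift {G : Type*} [AddZeroClass G] [MeasurableSpace G]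
    (μ : Measure G) {E : Set G} (hE : MeasurableSet E) {χ : G → Bool}
    (hχ : ∀ t, χ t = true ↔ t ∈ E) (s : Set G) :
    ∫ g in s, cylinderIndicator (0 : G) (fun t => χ (t + g)) ∂μ = μ.real (E ∩ s) := by
  simp only [cylinderIndicator_zero_shift hχ, integral_indicator_one hE,
    measureReal_restrict_apply hE]

theorem cluster_point_cylinder_measure_eq_upperDensity_general {G : Type*} [AddCommGroup G]
    [MeasurableSpace G]
    (μ : Measure G)
    (𝓕 : ℕ → Set G)
    (E : Set G) (hE : MeasurableSet E)
    (hElim : Filter.Tendsto (fun n => (μ (E ∩ 𝓕 n)).toReal / (μ (𝓕 n)).toReal)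
      Filter.atTop (nhds (upperDensity μ 𝓕 E)))
    (χ : G → Bool) (hχ : ∀ t : G, χ t = true ↔ t ∈ E)
    (μn : ℕ → Measure (G → Bool))
    (hμn : ∀ n, ∀ φ : C(G → Bool, ℝ),
      ∫ x, φ x ∂(μn n) = (μ (𝓕 n)).toReal⁻¹ * ∫ g in 𝓕 n, φ (fun t => χ (t + g)) ∂μ)
    (ν : Measure (G → Bool))
    (hcluster : MapClusterPt (fun φ : C(G → Bool, ℝ) => ∫ x, φ x ∂ν) Filter.atTop
      (fun n => fun φ : C(G → Bool, ℝ) => ∫ x, φ x ∂(μn n))) :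
    (ν {x : G → Bool | x 0 = true}).toReal = upperDensity μ 𝓕 E ∧
      (0 < upperDensity μ 𝓕 E → 0 < ν {x : G → Bool | x 0 = true}) := by
  have hμn_cyl : ∀ n, ∫ x, cylinderIndicator (0 : G) x ∂μn n =
      (μ (E ∩ 𝓕 n)).toReal / (μ (𝓕 n)).toReal := fun n => by
    rw [hμn, setIntegral_cylinderIndicator_shift μ hE hχ, div_eq_inv_mul, measureReal_def]
  have hν_cyl : ν.real {x | x 0 = true} = upperDensity μ 𝓕 E := by
    rw [← integral_cylinderIndicator]
    exact hcluster.eq_of_tendsto_comp (continuous_apply _).continuousAt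
      (hElim.congr fun n => (hμn_cyl n).symm)
  refine ⟨hν_cyl, fun hpos => ?_⟩
  rw [← hν_cyl, measureReal_def] at hpos
  exact (ENNReal.toReal_pos_iff.1 hpos).1

/-- Let `(G,+)` be a locally compact Hausdorff abelian topological group with Haar measure
`μ`, `F ⊆ G` compact, `𝓕 = (F_n)` an `F`-Følner sequence, and `E ⊆ G` measurable such that
`lim_n |E ∩ F_n| / |F_n|` exists and equals `D*_𝓕(E)`.  With `X = {0,1}^G` (encoded as
`G → Bool`), `T_g` the shift, `χ` the indicator of `E`, `μ_n` the Baire probability measure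
determined by `μ_n(φ) = (1/|F_n|) ∫_{F_n} φ(T_g χ) dg`, and `[1]_e = {x : x(e) = 1}`, every
weak-* cluster point `ν` of `(μ_n)` satisfies `ν([1]_e) = D*_𝓕(E)`; in particular if
`D*_𝓕(E) > 0` then `ν([1]_e) > 0`. -/
theorem cluster_point_cylinder_measure_eq_upperDensity {G : Type*} [AddCommGroup G]
    [TopologicalSpace G] [IsTopologicalAddGroup G] [LocallyCompactSpace G] [T2Space G]
    [MeasurableSpace G] [BorelSpace G]
    (μ : Measure G) [μ.IsAddHaarMeasure]
    (F : Set G) (hF : IsCompact F)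
    (𝓕 : ℕ → Set G) (h𝓕 : IsFolnerSeqOn μ F 𝓕)
    (E : Set G) (hE : MeasurableSet E)
    (hElim : Filter.Tendsto (fun n => (μ (E ∩ 𝓕 n)).toReal / (μ (𝓕 n)).toReal)
      Filter.atTop (nhds (upperDensity μ 𝓕 E)))
    (χ : G → Bool) (hχ : ∀ t : G, χ t = true ↔ t ∈ E)
    (μn : ℕ → Measure (G → Bool)) (hμnprob : ∀ n, IsProbabilityMeasure (μn n))
    (hμn : ∀ n, ∀ φ : C(G → Bool, ℝ),
      ∫ x, φ x ∂(μn n) = (μ (𝓕 n)).toReal⁻¹ * ∫ g in 𝓕 n, φ (fun t => χ (t + g)) ∂μ)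
    (ν : Measure (G → Bool)) (hνprob : IsProbabilityMeasure ν)
    (hcluster : MapClusterPt (fun φ : C(G → Bool, ℝ) => ∫ x, φ x ∂ν) Filter.atTop
      (fun n => fun φ : C(G → Bool, ℝ) => ∫ x, φ x ∂(μn n))) :
    (ν {x : G → Bool | x 0 = true}).toReal = upperDensity μ 𝓕 E ∧
      (0 < upperDensity μ 𝓕 E → 0 < ν {x : G → Bool | x 0 = true}) :=
  cluster_point_cylinder_measure_eq_upperDensity_general μ 𝓕 E hE hElim χ hχ μn hμn ν hcluster
end

section
/- Let (G,+) be a locally compact Hausdorff abelian topological group with a Haar measure |·|, F ⊆ G a compact subset, 𝓕 = (F_n)_{n=1}^∞ an F-Følner sequence in (G,+,|·|), and E ⊆ G a Haar-measurable set. Let X = {0,1}^G with the product topology, T_g the shift (T_g x)(t) = x(t+g), χ ∈ X the indicator of E, and μ_n the Baire probability measure on X with μ_n(φ) = (1/|F_n|) ∫_{F_n} φ(T_g χ) dg. Fix g_1, …, g_l ∈ G and d ∈ ℤ, and set U = {x ∈ X : x(e) = 1 and x(d·g_i) = 1 for i = 1,…,l} (a clopen subset of X) and A = {u ∈ E : u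 + d·g_i ∈ E for i = 1,…,l}. Then every weak-* cluster point μ of (μ_n)_{n=1}^∞ satisfies μ(U) ≤ D*_𝓕(A); in particular, if μ(U) > 0 then D*_𝓕(A) > 0. -/
open MeasureTheory Filter Topology

/-!
The indicator of the cylinder set `U` is a continuous function on `{0,1}^G`, and along the orbit
`u ↦ T_u χ` it pulls back to the indicator of `A`. Testing the weak-* convergence against it
shows that `ν(U)` is a cluster point of the densities `|A ∩ F_n| / |F_n|`, which are bounded
by `1`, so `ν(U)` is at most their limsup.
-/

open Set

theorem measureReal_inter_div_measureReal_le_one {α : Type*} [MeasurableSpace α]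
    (μ : Measure α) (A B : Set α) : μ.real (A ∩ B) / μ.real B ≤ 1 := by
  rcases eq_top_or_lt_top (μ B) with hB | hB
  · simp [Measure.real, hB]
  · exact div_le_one_of_le₀ (measureReal_mono inter_subset_right hB.ne) measureReal_nonneg

theorem le_upperDensity_of_mapClusterPt {G : Type*} [MeasurableSpace G] {μ : Measure G}
    {𝓕 : ℕ → Set G} {A : Set G} {a : ℝ}
    (h : MapClusterPt a atTop fun n => μ.real (A ∩ 𝓕 n) / μ.real (𝓕 n)) :
    a ≤ upperDensity μ 𝓕 A :=
  h.le_limsup (isBoundedUnder_of ⟨1, fun n => measureReal_inter_div_measureReal_le_one μ A (𝓕 n)⟩)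

section Cylinder

variable {α β : Type*} {S : Set α}

theorem isClopen_setOf_forall_mem_apply_eq [TopologicalSpace β] [DiscreteTopology β]
    (hS : S.Finite) (b : β) : IsClopen {x : α → β | ∀ t ∈ S, x t = b} := by
  simp only [ofPred_forall]
  exact hS.isClopen_biInter fun t _ => (isClopen_discrete {b}).preimage (continuous_apply t)

theorem measurableSet_setOf_forall_mem_apply_eq [MeasurableSpace β] [MeasurableSingletonClass β]
    (hS : S.Countable) (b : β) : MeasurableSet {x : α → β | ∀ t ∈ S, x t = b} := by
  simp only [ofPred_forall]
  exact .biInter hS fun t _ => (measurableSet_singleton b).preimage (measurable_pi_apply t)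

end Cylinder

section WeakStar

variable {X : Type*} [TopologicalSpace X] [MeasurableSpace X] {U : Set X}

theorem MapClusterPt.measureReal_of_isClopen {ι : Type*} {l : Filter ι} {ν : Measure X}
    {m : ι → Measure X}
    (h : MapClusterPt (fun φ : C(X, ℝ) => ∫ x, φ x ∂ν) l fun i φ => ∫ x, φ x ∂m i)
    (hUc : IsClopen U) (hUm : MeasurableSet U) :
    MapClusterPt (ν.real U) l fun i => (m i).real U := by
  let φ : C(X, ℝ) := ⟨U.indicator 1, hUc.continuous_indicator continuous_const⟩
  have := h.continuousAt_comp (continuous_apply φ).continuousAt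
  simpa only [Function.comp_def, φ, ContinuousMap.coe_mk, integral_indicator_one hUm] using this

theorem measureReal_eq_of_integral_eq_average {G : Type*} [MeasurableSpace G] {μ : Measure G}
    {F : Set G} {s : G → X} {m : Measure X}
    (hm : ∀ φ : C(X, ℝ), ∫ x, φ x ∂m = (μ F).toReal⁻¹ * ∫ u in F, φ (s u) ∂μ)
    (hUc : IsClopen U) (hUm : MeasurableSet U) (hsU : MeasurableSet (s ⁻¹' U)) :
    m.real U = μ.real (s ⁻¹' U ∩ F) / μ.real F := by
  have := hm ⟨U.indicator 1, hUc.continuous_indicator continuous_const⟩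
  simp only [ContinuousMap.coe_mk, integral_indicator_one hUm, ← indicator_comp_right,
    Pi.one_comp] at this
  rw [this, integral_indicator_one hsU, measureReal_restrict_apply hsU, inv_mul_eq_div]
  rfl

end WeakStar

theorem cluster_point_measure_le_upperDensity_general {G : Type*} [AddCommGroup G]
    [TopologicalSpace G] [IsTopologicalAddGroup G]
    [MeasurableSpace G] [BorelSpace G]
    (μ : Measure G)
    (𝓕 : ℕ → Set G)
    (E : Set G) (hE : MeasurableSet E)
    (χ : G → Bool) (hχ : ∀ t : G, χ t = true ↔ t ∈ E)
    (μn : ℕ → Measure (G → Bool))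
    (hμn : ∀ n, ∀ φ : C(G → Bool, ℝ),
      ∫ x, φ x ∂(μn n) = (μ (𝓕 n)).toReal⁻¹ * ∫ g in 𝓕 n, φ (fun t => χ (t + g)) ∂μ)
    (ν : Measure (G → Bool)) (hνprob : IsProbabilityMeasure ν)
    (hcluster : MapClusterPt (fun φ : C(G → Bool, ℝ) => ∫ x, φ x ∂ν) Filter.atTop
      (fun n => fun φ : C(G → Bool, ℝ) => ∫ x, φ x ∂(μn n)))
    (l : ℕ) (g : Fin l → G) (d : ℤ)
    (U : Set (G → Bool))
    (hU : U = {x : G → Bool | x 0 = true ∧ ∀ i : Fin l, x (d • g i) = true})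
    (A : Set G) (hA : A = {u ∈ E | ∀ i : Fin l, u + d • g i ∈ E}) :
    (ν U).toReal ≤ upperDensity μ 𝓕 A ∧ (0 < ν U → 0 < upperDensity μ 𝓕 A) := by
  set S : Set G := insert 0 (range fun i => d • g i)
  have hS : S.Finite := (finite_range _).insert 0
  have hUS : U = {x | ∀ t ∈ S, x t = true} := by simp [hU, S]
  have hAS : A = ⋂ t ∈ S, (· + t) ⁻¹' E := by ext; simp [hA, S]
  have hAm : MeasurableSet A :=
    hAS ▸ .biInter hS.countable fun t _ => hE.preimage (measurable_add_const t)
  have horbit : (fun u t => χ (t + u)) ⁻¹' U = A := by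
    ext u
    simp [hUS, hAS, hχ, add_comm]
  have hUc : IsClopen U := hUS ▸ isClopen_setOf_forall_mem_apply_eq hS true
  have hUm : MeasurableSet U := hUS ▸ measurableSet_setOf_forall_mem_apply_eq hS.countable true
  have hcl : MapClusterPt (ν.real U) atTop fun n => μ.real (A ∩ 𝓕 n) / μ.real (𝓕 n) := by
    simpa only [measureReal_eq_of_integral_eq_average (hμn _) hUc hUm (horbit ▸ hAm), horbit]
      using hcluster.measureReal_of_isClopen hUc hUm
  have hle := le_upperDensity_of_mapClusterPt hcl
  exact ⟨hle, fun hpos => (ENNReal.toReal_pos hpos.ne' (measure_ne_top ν U)).trans_le hle⟩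

/-- Let `(G,+)` be a locally compact Hausdorff abelian topological group with Haar measure
`μ`, `F ⊆ G` compact, `𝓕 = (F_n)` an `F`-Følner sequence, `E ⊆ G` measurable.  With
`X = {0,1}^G` (encoded as `G → Bool`), `T_g` the shift, `χ` the indicator of `E`, and `μ_n`
the Baire probability measure determined by `μ_n(φ) = (1/|F_n|) ∫_{F_n} φ(T_g χ) dg`:
fixing `g_1, …, g_l ∈ G` and `d ∈ ℤ`, with
`U = {x : x(e) = 1 and x(d·g_i) = 1 for all i}` and `A = {u ∈ E : u + d·g_i ∈ E for all i}`,
every weak-* cluster point `ν` of `(μ_n)` satisfies `ν(U) ≤ D*_𝓕(A)`; in particular if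
`ν(U) > 0` then `D*_𝓕(A) > 0`. -/
theorem cluster_point_measure_le_upperDensity {G : Type*} [AddCommGroup G]
    [TopologicalSpace G] [IsTopologicalAddGroup G] [LocallyCompactSpace G] [T2Space G]
    [MeasurableSpace G] [BorelSpace G]
    (μ : Measure G) [μ.IsAddHaarMeasure]
    (F : Set G) (hF : IsCompact F)
    (𝓕 : ℕ → Set G) (h𝓕 : IsFolnerSeqOn μ F 𝓕)
    (E : Set G) (hE : MeasurableSet E)
    (χ : G → Bool) (hχ : ∀ t : G, χ t = true ↔ t ∈ E)
    (μn : ℕ → Measure (G → Bool)) (hμnprob : ∀ n, IsProbabilityMeasure (μn n))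
    (hμn : ∀ n, ∀ φ : C(G → Bool, ℝ),
      ∫ x, φ x ∂(μn n) = (μ (𝓕 n)).toReal⁻¹ * ∫ g in 𝓕 n, φ (fun t => χ (t + g)) ∂μ)
    (ν : Measure (G → Bool)) (hνprob : IsProbabilityMeasure ν)
    (hcluster : MapClusterPt (fun φ : C(G → Bool, ℝ) => ∫ x, φ x ∂ν) Filter.atTop
      (fun n => fun φ : C(G → Bool, ℝ) => ∫ x, φ x ∂(μn n)))
    (l : ℕ) (g : Fin l → G) (d : ℤ)
    (U : Set (G → Bool))
    (hU : U = {x : G → Bool | x 0 = true ∧ ∀ i : Fin l, x (d • g i) = true})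
    (A : Set G) (hA : A = {u ∈ E | ∀ i : Fin l, u + d • g i ∈ E}) :
    (ν U).toReal ≤ upperDensity μ 𝓕 A ∧ (0 < ν U → 0 < upperDensity μ 𝓕 A) :=
  cluster_point_measure_le_upperDensity_general μ 𝓕 E hE χ hχ μn hμn ν hνprob hcluster l g d U hU A
    hA
end
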